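/- In a DAG G, every trek from a set I to a set J is incident to every choke point in C(I,J), and all treks from I to J pass through the choke points of C(I,J) in the same order. -/

import Mathlib

/-!
Every edge increases the vertex label, so both sides of a trek are strictly increasing from the
top. Read from `i` to `j`, a trek therefore lists its `I`-side in decreasing and its `J`-side in
increasing order, and every `I`-side vertex comes no later than every `J`-side vertex. The relative
position of two choke points is then decided by their labels and their sides alone, and the sides
are the same on every trek from `I` to `J`.
-/

open MvPolynomial

/-- A directed acyclic graph on vertices `{0, …, n-1}`, numerically ordered:
`i → j` only if `i < j`. -/
structure DAG (n : ℕ) where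
  edge : Fin n → Fin n → Bool
  increasing : ∀ i j, edge i j = true → i < j

namespace DAG

variable {n : ℕ}

/-- Indeterminates: `a_i` for each vertex (Sum.inl) and `λ_{kl}` for each
potential edge (Sum.inr). -/
abbrev Vars (n : ℕ) := Fin n ⊕ (Fin n × Fin n)

/-- `L` is the directed path from the top down to `i`, `R` from the top down to `j`;
they share exactly the top vertex, and the resulting colliderless path is simple. -/
def IsTrek (G : DAG n) (i j : Fin n) (L R : List (Fin n)) : Prop :=
  L ≠ [] ∧ R ≠ [] ∧ L.head? = R.head? ∧ L.getLast? = some i ∧ R.getLast? = some j ∧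
    L.Chain' (fun a b => G.edge a b = true) ∧ R.Chain' (fun a b => G.edge a b = true) ∧
    (L ++ R.tail).Nodup

/-- The type of treks from `i` to `j` in `G`. -/
def Trek (G : DAG n) (i j : Fin n) : Type :=
  {p : {l : List (Fin n) // l.Nodup} × {l : List (Fin n) // l.Nodup} //
    IsTrek G i j p.1.1 p.2.1}

noncomputable instance (G : DAG n) (i j : Fin n) : Fintype (Trek G i j) := by
  classical exact Subtype.fintype _

def Trek.left {G : DAG n} {i j : Fin n} (P : Trek G i j) : List (Fin n) := P.1.1.1
def Trek.right {G : DAG n} {i j : Fin n} (P : Trek G i j) : List (Fin n) := P.1.2.1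

/-- The topmost vertex of a trek. -/
def Trek.top {G : DAG n} {i j : Fin n} (P : Trek G i j) : Fin n := P.left.head?.getD i

/-- The consecutive pairs (directed edges) of a vertex list. -/
def pathEdges (l : List (Fin n)) : List (Fin n × Fin n) := l.zip l.tail

/-- The (directed) edges used by a trek. -/
def Trek.edges {G : DAG n} {i j : Fin n} (P : Trek G i j) : List (Fin n × Fin n) :=
  pathEdges P.left ++ pathEdges P.right

/-- The monomial `a_{top(P)} · ∏_{k→l ∈ P} λ_{kl}` of a trek. -/
noncomputable def Trek.poly {G : DAG n} {i j : Fin n} (P : Trek G i j) :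
    MvPolynomial (Vars n) ℂ :=
  X (Sum.inl P.top) * (P.edges.map (fun e => X (Sum.inr e))).prod

/-- The trek-rule polynomial `σ_{ij}(a,λ) = ∑_{P ∈ T(i,j)} a_{top(P)} ∏_{k→l∈P} λ_{kl}`. -/
noncomputable def trekPoly (G : DAG n) (i j : Fin n) : MvPolynomial (Vars n) ℂ :=
  ∑ P : Trek G i j, P.poly

/-- The parent set `pa(j)` of a vertex. -/
def parents (G : DAG n) (j : Fin n) : Finset (Fin n) :=
  Finset.univ.filter (fun k => G.edge k j = true)

/-- Index set for the entries `σ_{ij}`, `1 ≤ i ≤ j ≤ n`, of a symmetric matrix. -/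
abbrev SymIdx (n : ℕ) := {p : Fin n × Fin n // p.1 ≤ p.2}

/-- The variable index `σ_{ij}` (sorted). -/
def sIdx (i j : Fin n) : SymIdx n :=
  if h : i ≤ j then ⟨(i, j), h⟩ else ⟨(j, i), (le_total i j).resolve_left h⟩

/-- The trek-rule ring homomorphism `φ_G : ℂ[σ] → ℂ[a,λ]`. -/
noncomputable def phi (G : DAG n) :
    MvPolynomial (SymIdx n) ℂ →ₐ[ℂ] MvPolynomial (Vars n) ℂ :=
  aeval (fun p => trekPoly G p.1.1 p.1.2)

/-- The vanishing ideal `I_G = ker φ_G` of the Gaussian Bayesian network of `G`. -/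
noncomputable def gaussianIdeal (G : DAG n) : Ideal (MvPolynomial (SymIdx n) ℂ) :=
  RingHom.ker (phi G)

/-- The underlying undirected graph of `G`. -/
def underlying (G : DAG n) : SimpleGraph (Fin n) where
  Adj i j := G.edge i j = true ∨ G.edge j i = true
  symm := by
    constructor
    intro i j h
    exact h.symm
  loopless := by
    constructor
    intro i h
    rcases h with h | h <;> exact absurd (G.increasing i i h) (lt_irrefl i)

/-- A polytree: a DAG whose underlying undirected graph is a tree. -/
def IsPolytree (G : DAG n) : Prop := G.underlying.IsTree

/-- `c` is a choke point between `I` and `J`: every trek from `I` to `J` contains `c`,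
and `c` is on the `I`-side of every such trek, or on the `J`-side of every such trek. -/
def IsChokePoint (G : DAG n) (I J : Set (Fin n)) (c : Fin n) : Prop :=
  (∀ i ∈ I, ∀ j ∈ J, ∀ P : Trek G i j, c ∈ P.left) ∨
  (∀ i ∈ I, ∀ j ∈ J, ∀ P : Trek G i j, c ∈ P.right)

/-- The induced subgraph on a vertex subset `S` (kept on the same vertex set). -/
def induce (G : DAG n) (S : Finset (Fin n)) : DAG n where
  edge i j := decide (G.edge i j = true ∧ i ∈ S ∧ j ∈ S)
  increasing := by
    intro i j h
    exact G.increasing i j (of_decide_eq_true h).1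

/-- Indices `σ_{ij}` with both `i, j ∈ S`. -/
abbrev SubIdx (n : ℕ) (S : Finset (Fin n)) := {p : SymIdx n // p.1.1 ∈ S ∧ p.1.2 ∈ S}

/-- The trek-rule homomorphism restricted to the variables `σ_{ij}`, `i,j ∈ S`. -/
noncomputable def phiSub (G : DAG n) (S : Finset (Fin n)) :
    MvPolynomial (SubIdx n S) ℂ →ₐ[ℂ] MvPolynomial (Vars n) ℂ :=
  aeval (fun p => trekPoly G p.1.1.1 p.1.1.2)

/-- The ideal `I_{G,S} = I_G ∩ ℂ[σ_{ij} : i,j ∈ S]` of the model with observed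
variables `S` (the remaining variables hidden). -/
noncomputable def hiddenIdeal (G : DAG n) (S : Finset (Fin n)) :
    Ideal (MvPolynomial (SubIdx n S) ℂ) :=
  RingHom.ker (phiSub G S)

end DAG

open DAG in
/-- The trek as a single vertex sequence from `i` through the top to `j`. -/
def DAG.trekSeq {n : ℕ} {G : DAG n} {i j : Fin n} (P : Trek G i j) : List (Fin n) :=
  P.left.reverse ++ P.right.tail

namespace List

variable {α : Type*}

theorem Pairwise.rel_of_idxOf_lt [BEq α] [LawfulBEq α] {r : α → α → Prop} {l : List α}
    {a b : α} (h : l.Pairwise r) (hb : b ∈ l) (hab : l.idxOf a < l.idxOf b) : r a b := by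
  have hb' : l.idxOf b < l.length := idxOf_lt_length_iff.2 hb
  simpa only [getElem_idxOf] using pairwise_iff_getElem.1 h _ _ (hab.trans hb') hb' hab

theorem idxOf_le_idxOf_iff_of_pairwise_lt [LinearOrder α] {l : List α} {a b : α}
    (h : l.Pairwise (· < ·)) (ha : a ∈ l) (hb : b ∈ l) :
    l.idxOf a ≤ l.idxOf b ↔ a ≤ b := by
  refine ⟨fun hle => ?_, fun hab => not_lt.1 fun hlt => (h.rel_of_idxOf_lt ha hlt).not_ge hab⟩
  rcases hle.lt_or_eq with hlt | heq
  · exact (h.rel_of_idxOf_lt hb hlt).le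
  · exact ((idxOf_inj ha).1 heq).le

theorem idxOf_le_idxOf_iff_of_pairwise_gt [LinearOrder α] {l : List α} {a b : α}
    (h : l.Pairwise (· > ·)) (ha : a ∈ l) (hb : b ∈ l) :
    l.idxOf a ≤ l.idxOf b ↔ b ≤ a :=
  idxOf_le_idxOf_iff_of_pairwise_lt (α := αᵒᵈ) h ha hb

end List

namespace DAG.Trek

variable {n : ℕ} {G : DAG n} {i j c c₁ c₂ : Fin n} (P : Trek G i j)

theorem isTrek : IsTrek G i j P.left P.right := P.2

theorem left_pairwise_lt : P.left.Pairwise (· < ·) :=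
  List.isChain_iff_pairwise.1 (P.isTrek.2.2.2.2.2.1.imp (G.increasing · ·))

theorem right_pairwise_lt : P.right.Pairwise (· < ·) :=
  List.isChain_iff_pairwise.1 (P.isTrek.2.2.2.2.2.2.1.imp (G.increasing · ·))

theorem exists_left_right_eq_cons : ∃ t L R, P.left = t :: L ∧ P.right = t :: R := by
  obtain ⟨hL, hR, hhead, -⟩ := P.isTrek
  obtain ⟨t, L, hL⟩ := List.exists_cons_of_ne_nil hL
  obtain ⟨s, R, hR⟩ := List.exists_cons_of_ne_nil hR
  obtain rfl : t = s := by simpa [hL, hR] using hhead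
  exact ⟨t, L, R, hL, hR⟩

theorem trekSeq_eq_tail_reverse_append : trekSeq P = P.left.tail.reverse ++ P.right := by
  obtain ⟨t, L, R, hL, hR⟩ := P.exists_left_right_eq_cons
  simp [trekSeq, hL, hR]

theorem notMem_left_tail_of_mem_right (hc : c ∈ P.right) : c ∉ P.left.tail := by
  have hnd := P.isTrek.2.2.2.2.2.2.2
  obtain ⟨t, L, R, hL, hR⟩ := P.exists_left_right_eq_cons
  simp only [hL, hR, List.tail_cons, List.cons_append, List.nodup_cons, List.nodup_append,
    List.mem_append, not_or, List.mem_cons] at hnd hc ⊢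
  grind

theorem mem_trekSeq_of_mem_left (hc : c ∈ P.left) : c ∈ trekSeq P :=
  List.mem_append_left _ (List.mem_reverse.2 hc)

theorem mem_trekSeq_of_mem_right (hc : c ∈ P.right) : c ∈ trekSeq P :=
  P.trekSeq_eq_tail_reverse_append ▸ List.mem_append_right _ hc

theorem idxOf_trekSeq_of_mem_left (hc : c ∈ P.left) :
    (trekSeq P).idxOf c = P.left.reverse.idxOf c :=
  List.idxOf_append_of_mem (List.mem_reverse.2 hc)

theorem idxOf_trekSeq_of_mem_right (hc : c ∈ P.right) :
    (trekSeq P).idxOf c = P.left.tail.length + P.right.idxOf c := by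
  rw [trekSeq_eq_tail_reverse_append, List.idxOf_append_of_notMem]
  · rw [List.length_reverse]
  · simpa using P.notMem_left_tail_of_mem_right hc

theorem idxOf_trekSeq_le_of_mem_left (hc : c ∈ P.left) :
    (trekSeq P).idxOf c ≤ P.left.tail.length := by
  have := List.idxOf_lt_length_iff.2 (List.mem_reverse.2 hc)
  rw [List.length_reverse] at this
  rw [idxOf_trekSeq_of_mem_left P hc, List.length_tail]
  omega

theorem idxOf_trekSeq_le_iff_of_mem_left_left (h₁ : c₁ ∈ P.left) (h₂ : c₂ ∈ P.left) :
    (trekSeq P).idxOf c₁ ≤ (trekSeq P).idxOf c₂ ↔ c₂ ≤ c₁ := by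
  rw [P.idxOf_trekSeq_of_mem_left h₁, P.idxOf_trekSeq_of_mem_left h₂]
  exact List.idxOf_le_idxOf_iff_of_pairwise_gt (List.pairwise_reverse.2 P.left_pairwise_lt)
    (List.mem_reverse.2 h₁) (List.mem_reverse.2 h₂)

theorem idxOf_trekSeq_le_iff_of_mem_right_right (h₁ : c₁ ∈ P.right) (h₂ : c₂ ∈ P.right) :
    (trekSeq P).idxOf c₁ ≤ (trekSeq P).idxOf c₂ ↔ c₁ ≤ c₂ := by
  rw [P.idxOf_trekSeq_of_mem_right h₁, P.idxOf_trekSeq_of_mem_right h₂, Nat.add_le_add_iff_left]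
  exact List.idxOf_le_idxOf_iff_of_pairwise_lt P.right_pairwise_lt h₁ h₂

theorem idxOf_trekSeq_le_of_mem_left_right (h₁ : c₁ ∈ P.left) (h₂ : c₂ ∈ P.right) :
    (trekSeq P).idxOf c₁ ≤ (trekSeq P).idxOf c₂ := by
  rw [P.idxOf_trekSeq_of_mem_right h₂]
  exact (P.idxOf_trekSeq_le_of_mem_left h₁).trans (Nat.le_add_right _ _)

theorem idxOf_trekSeq_le_iff_of_mem_right_left (h₁ : c₁ ∈ P.right) (h₂ : c₂ ∈ P.left) :
    (trekSeq P).idxOf c₁ ≤ (trekSeq P).idxOf c₂ ↔ c₁ = c₂ := by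
  refine ⟨fun hle => ?_, fun h => h ▸ le_rfl⟩
  have hge := P.idxOf_trekSeq_le_of_mem_left_right h₂ h₁
  exact (List.idxOf_inj (P.mem_trekSeq_of_mem_right h₁)).1 (hle.antisymm hge)

end DAG.Trek

namespace DAG.IsChokePoint

variable {n : ℕ} {G : DAG n} {I J : Set (Fin n)} {i j c : Fin n}

theorem mem_trekSeq (h : IsChokePoint G I J c) (hi : i ∈ I) (hj : j ∈ J) (P : Trek G i j) :
    c ∈ trekSeq P :=
  h.elim (fun h => P.mem_trekSeq_of_mem_left (h i hi j hj P))
    (fun h => P.mem_trekSeq_of_mem_right (h i hi j hj P))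

end DAG.IsChokePoint

open DAG in
/-- Every trek from `I` to `J` is incident to every choke point of `C(I,J)`, and all
treks from `I` to `J` reach the choke points in the same order. -/
theorem chokePoints_incident_and_same_order {n : ℕ} (G : DAG n) (I J : Set (Fin n))
    (c₁ c₂ : Fin n) (h₁ : IsChokePoint G I J c₁) (h₂ : IsChokePoint G I J c₂) :
    (∀ i ∈ I, ∀ j ∈ J, ∀ P : Trek G i j, c₁ ∈ trekSeq P ∧ c₂ ∈ trekSeq P) ∧
    (∀ i ∈ I, ∀ j ∈ J, ∀ i' ∈ I, ∀ j' ∈ J, ∀ (P : Trek G i j) (Q : Trek G i' j'),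
      ((trekSeq P).idxOf c₁ ≤ (trekSeq P).idxOf c₂ ↔
        (trekSeq Q).idxOf c₁ ≤ (trekSeq Q).idxOf c₂)) := by
  refine ⟨fun i hi j hj P => ⟨h₁.mem_trekSeq hi hj P, h₂.mem_trekSeq hi hj P⟩,
    fun i hi j hj i' hi' j' hj' P Q => ?_⟩
  rcases h₁ with h₁ | h₁ <;> rcases h₂ with h₂ | h₂
  · rw [P.idxOf_trekSeq_le_iff_of_mem_left_left (h₁ i hi j hj P) (h₂ i hi j hj P),
      Q.idxOf_trekSeq_le_iff_of_mem_left_left (h₁ i' hi' j' hj' Q) (h₂ i' hi' j' hj' Q)]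
  · exact iff_of_true (P.idxOf_trekSeq_le_of_mem_left_right (h₁ i hi j hj P) (h₂ i hi j hj P))
      (Q.idxOf_trekSeq_le_of_mem_left_right (h₁ i' hi' j' hj' Q) (h₂ i' hi' j' hj' Q))
  · rw [P.idxOf_trekSeq_le_iff_of_mem_right_left (h₁ i hi j hj P) (h₂ i hi j hj P),
      Q.idxOf_trekSeq_le_iff_of_mem_right_left (h₁ i' hi' j' hj' Q) (h₂ i' hi' j' hj' Q)]
  · rw [P.idxOf_trekSeq_le_iff_of_mem_right_right (h₁ i hi j hj P) (h₂ i hi j hj P),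
      Q.idxOf_trekSeq_le_iff_of_mem_right_right (h₁ i' hi' j' hj' Q) (h₂ i' hi' j' hj' Q)]
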